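/- Let ρ > 0 be a real parameter. The MKdV map of one degree of freedom, Φ(q,p) = (q̄,p̄) with p̄ = p + 2·log((1 + ρ·e^q)/(ρ + e^q)) and q̄ = q + 2·log((ρ + e^{p̄})/(1 + ρ·e^{p̄})), is area-preserving: at every point (q,p) ∈ ℝ² the Jacobian matrix of Φ has determinant equal to 1 (equivalently, dq̄ ∧ dp̄ = dq ∧ dp). -/

import Mathlib

noncomputable section

/-- First component update of the one-degree-of-freedom MKdV map:
`p̄(q,p) = p + 2 log((1+ρe^q)/(ρ+e^q))`. -/
def mkdvPbar (ρ : ℝ) (q p : ℝ) : ℝ :=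
  p + 2 * Real.log ((1 + ρ * Real.exp q) / (ρ + Real.exp q))

/-- Second component update of the one-degree-of-freedom MKdV map:
`q̄(q,p) = q + 2 log((ρ+e^{p̄})/(1+ρe^{p̄}))`. -/
def mkdvQbar (ρ : ℝ) (q p : ℝ) : ℝ :=
  q + 2 * Real.log ((ρ + Real.exp (mkdvPbar ρ q p)) / (1 + ρ * Real.exp (mkdvPbar ρ q p)))

/-!
The MKdV map is the composition of the two shears `(q, p) ↦ (q, p + F q)` and
`(q, p̄) ↦ (q + G p̄, p̄)`, where `F s = 2 log((1+ρeˢ)/(ρ+eˢ))` and `G t = 2 log((ρ+eᵗ)/(1+ρeᵗ))`.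
A shear has unit Jacobian determinant whatever its shift function, so the only input from the
specific `F` and `G` is their differentiability, which holds because `ρ > 0` keeps the arguments
of the logarithms positive.
-/

theorem det_deriv_shear_comp {𝕜 : Type*} [NontriviallyNormedField 𝕜] {F G : 𝕜 → 𝕜} {q p : 𝕜}
    (hF : DifferentiableAt 𝕜 F q) (hG : DifferentiableAt 𝕜 G (p + F q)) :
    !![deriv (fun s => s + G (p + F s)) q, deriv (fun s => q + G (s + F q)) p;
       deriv (fun s => p + F s) q, deriv (fun s => s + F q) p].det = 1 := by
  have hP_q : HasDerivAt (fun s => p + F s) (deriv F q) q := hF.hasDerivAt.const_add p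
  have hP_p : HasDerivAt (fun s => s + F q) 1 p := (hasDerivAt_id p).add_const (F q)
  have hQ_q : HasDerivAt (fun s => s + G (p + F s)) (1 + deriv G (p + F q) * deriv F q) q :=
    (hasDerivAt_id q).add (hG.hasDerivAt.comp q hP_q)
  have hQ_p : HasDerivAt (fun s => q + G (s + F q)) (deriv G (p + F q) * 1) p :=
    (hG.hasDerivAt.comp p hP_p).const_add q
  rw [hQ_q.deriv, hQ_p.deriv, hP_q.deriv, hP_p.deriv, Matrix.det_fin_two_of]
  ring

/-- The one-degree-of-freedom MKdV map (with parameter `ρ > 0`) is area-preserving: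
at every point of `ℝ²` the determinant of its Jacobian matrix equals `1`. -/
theorem mkdv_map_symplectic (ρ : ℝ) (hρ : 0 < ρ) (q p : ℝ) :
    (Matrix.det
      !![deriv (fun s => mkdvQbar ρ s p) q, deriv (fun s => mkdvQbar ρ q s) p;
         deriv (fun s => mkdvPbar ρ s p) q, deriv (fun s => mkdvPbar ρ q s) p]) = 1 :=
  det_deriv_shear_comp
    (F := fun s => 2 * Real.log ((1 + ρ * Real.exp s) / (ρ + Real.exp s)))
    (G := fun t => 2 * Real.log ((ρ + Real.exp t) / (1 + ρ * Real.exp t)))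
    (by fun_prop (disch := positivity)) (by fun_prop (disch := positivity))
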